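/- Let F : Finset V → ℝ be monotone, submodular, and normalized (F(∅) = 0), on a finite ground set V. Let S_k be the set produced by k steps of the greedy algorithm that at each step adds an element maximizing the marginal gain F(e | S) = F(S ∪ {e}) − F(S). Then for any set T with |T| ≤ k, F(S_k) ≥ (1 − (1 − 1/k)^k) F(T) ≥ (1 − e^{−1}) F(T). -/

import Mathlib

lemma margin_sum_bound {V : Type*} [DecidableEq V]
    (F : Finset V → ℝ)
    (hmono : ∀ S T : Finset V, S ⊆ T → F S ≤ F T)
    (hsub : ∀ (S T : Finset V), S ⊆ T → ∀ e ∉ T,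
      F (insert e T) - F T ≤ F (insert e S) - F S)
    (S : Finset V) (T : Finset V) :
    F (S ∪ T) ≤ F S + ∑ e ∈ T, (F (insert e S) - F S) := by
  induction T using Finset.induction_on with
  | empty => simp
  | insert a T' ha ih =>
    rw [Finset.sum_insert ha]
    rw [Finset.union_insert]
    by_cases hmem : a ∈ S ∪ T'
    · rw [Finset.insert_eq_self.mpr hmem]
      have h2 := hmono S (insert a S) (Finset.subset_insert a S)
      linarith
    · have := hsub S (S ∪ T') Finset.subset_union_left a hmem
      linarith

/-- Nemhauser–Wolsey–Fisher (1 - 1/e) guarantee for greedy maximization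
of a monotone, normalized submodular function under a cardinality constraint. -/
theorem greedy_submodular_guarantee
    {V : Type*} [Fintype V] [DecidableEq V]
    (F : Finset V → ℝ)
    (hmono : ∀ S T : Finset V, S ⊆ T → F S ≤ F T)
    (hsub : ∀ (S T : Finset V), S ⊆ T → ∀ e ∉ T,
      F (insert e T) - F T ≤ F (insert e S) - F S)
    (hnorm : F ∅ = 0)
    (k : ℕ) (hk : 0 < k)
    (Sgreedy : ℕ → Finset V)
    (h0 : Sgreedy 0 = ∅)
    (hstep : ∀ n, ∃ e : V, Sgreedy (n + 1) = insert e (Sgreedy n) ∧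
      ∀ e' : V, F (insert e' (Sgreedy n)) - F (Sgreedy n) ≤
        F (insert e (Sgreedy n)) - F (Sgreedy n))
    (T : Finset V) (hT : T.card ≤ k) :
    (1 - (1 - 1 / (k : ℝ)) ^ k) * F T ≤ F (Sgreedy k) ∧
    (1 - Real.exp (-1)) * F T ≤ (1 - (1 - 1 / (k : ℝ)) ^ k) * F T := by
  have hk0 : (0 : ℝ) < k := by exact_mod_cast hk
  have hk1 : (1 : ℝ) ≤ k := by exact_mod_cast hk
  set c : ℝ := 1 - 1 / (k : ℝ) with hc
  have hc0 : 0 ≤ c := by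
    have : 1 / (k : ℝ) ≤ 1 := by
      rw [div_le_one hk0]; exact hk1
    simp only [hc]; linarith
  have hFT0 : 0 ≤ F T := by
    have := hmono ∅ T (Finset.empty_subset T); linarith
  -- key recurrence
  have key : ∀ n, F T - F (Sgreedy (n + 1)) ≤ c * (F T - F (Sgreedy n)) := by
    intro n
    obtain ⟨e, he1, he2⟩ := hstep n
    set g : ℝ := F (Sgreedy (n + 1)) - F (Sgreedy n) with hg
    have hg' : g = F (insert e (Sgreedy n)) - F (Sgreedy n) := by rw [hg, he1]
    have hg0 : 0 ≤ g := by
      rw [hg']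
      have := hmono (Sgreedy n) (insert e (Sgreedy n)) (Finset.subset_insert _ _)
      linarith
    have h1 : F T ≤ F (Sgreedy n ∪ T) :=
      hmono T _ Finset.subset_union_right
    have h2 := margin_sum_bound F hmono hsub (Sgreedy n) T
    have h3 : ∑ e' ∈ T, (F (insert e' (Sgreedy n)) - F (Sgreedy n)) ≤ T.card • g := by
      rw [← Finset.sum_const]
      apply Finset.sum_le_sum
      intro x _
      rw [hg']; exact he2 x
    have h4 : (T.card : ℝ) * g ≤ (k : ℝ) * g := by
      apply mul_le_mul_of_nonneg_right _ hg0
      exact_mod_cast hT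
    rw [nsmul_eq_mul] at h3
    have h5 : F T - F (Sgreedy n) ≤ (k : ℝ) * g := by linarith
    have h6 : (F T - F (Sgreedy n)) * (1 / (k : ℝ)) ≤ g := by
      have h7 := mul_le_mul_of_nonneg_right h5 (le_of_lt (one_div_pos.mpr hk0))
      have h8 : (k : ℝ) * g * (1 / (k : ℝ)) = g := by field_simp
      linarith
    have hgdef : F (Sgreedy (n + 1)) = F (Sgreedy n) + g := by rw [hg]; ring
    rw [hc, hgdef]
    nlinarith [h6]
  have main : ∀ n, F T - F (Sgreedy n) ≤ c ^ n * F T := by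
    intro n
    induction n with
    | zero => simp [h0, hnorm]
    | succ n ih =>
      calc F T - F (Sgreedy (n + 1)) ≤ c * (F T - F (Sgreedy n)) := key n
        _ ≤ c * (c ^ n * F T) := mul_le_mul_of_nonneg_left ih hc0
        _ = c ^ (n + 1) * F T := by ring
  constructor
  · have := main k; linarith [this]
  · have h1 : c ≤ Real.exp (-(1 / (k : ℝ))) := by
      have := Real.add_one_le_exp (-(1 / (k : ℝ)))
      linarith
    have h2 : c ^ k ≤ Real.exp (-(1 / (k : ℝ))) ^ k := pow_le_pow_left₀ hc0 h1 k
    have h3 : Real.exp (-(1 / (k : ℝ))) ^ k = Real.exp (-1) := by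
      rw [← Real.exp_nat_mul]
      congr 1
      field_simp
    rw [h3] at h2
    apply mul_le_mul_of_nonneg_right _ hFT0
    linarith
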